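/- arXiv:2209.03786 — 2 statements merged into one kernel-verified Lean document; each statement's English description precedes it below -/
import Mathlib

section
/- Let ρ be a polymatroid on E and A ⊆ E. Then both cl_ρ(cy_ρ(A)) and cy_ρ(cl_ρ(A)) are cyclic flats B satisfying ρ(A) = ρ(B) + Σ_{i ∈ A \ B} ρ({i}). -/
open Finset
open scoped Classical

variable {α : Type*}

def IsPolymatroid [DecidableEq α] (ρ : Finset α → ℝ) : Prop :=
  ρ ∅ = 0 ∧ (∀ A B : Finset α, A ⊆ B → ρ A ≤ ρ B) ∧
    (∀ A B : Finset α, ρ (A ∪ B) + ρ (A ∩ B) ≤ ρ A + ρ B)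

/-- `A` is a flat of the polymatroid `ρ` (ground set = all of `α`). -/
def PmFlat [DecidableEq α] (ρ : Finset α → ℝ) (A : Finset α) : Prop :=
  ∀ i : α, i ∉ A → ρ A < ρ (insert i A)

/-- `A` is a cyclic set of the polymatroid `ρ`. -/
def PmCyclic [DecidableEq α] (ρ : Finset α → ℝ) (A : Finset α) : Prop :=
  ∀ i ∈ A, 0 < ρ {i} → ρ A < ρ (A.erase i) + ρ {i}

/-- The closure of `A`: the set `{i : ρ(A ∪ {i}) = ρ(A)}`. -/
noncomputable def pmCl [DecidableEq α] [Fintype α] (ρ : Finset α → ℝ) (A : Finset α) :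
    Finset α :=
  Finset.univ.filter (fun i => ρ (insert i A) = ρ A)

/-- The maximum cyclic subset of `A`: the union of all cyclic subsets of `A`. -/
noncomputable def pmCy [DecidableEq α] (ρ : Finset α → ℝ) (A : Finset α) : Finset α :=
  (A.powerset.filter (fun D => PmCyclic ρ D)).sup id

section Aux
variable [DecidableEq α] {ρ : Finset α → ℝ}

lemma pm_nonneg (hρ : IsPolymatroid ρ) (A : Finset α) : 0 ≤ ρ A := by
  have h := hρ.2.1 ∅ A (empty_subset A)
  rw [hρ.1] at h; exact h

lemma pm_erase (hρ : IsPolymatroid ρ) {A : Finset α} {i : α} (hi : i ∈ A) :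
    ρ A ≤ ρ (A.erase i) + ρ {i} := by
  have h := hρ.2.2 (A.erase i) {i}
  have h1 : A.erase i ∪ {i} = A := by
    ext j; simp only [mem_union, mem_erase, mem_singleton]
    constructor
    · rintro (⟨_, hj⟩ | rfl)
      · exact hj
      · exact hi
    · intro hj; by_cases hji : j = i
      · exact Or.inr hji
      · exact Or.inl ⟨hji, hj⟩
  have h2 : A.erase i ∩ {i} = ∅ := by
    ext j; simp [mem_inter, mem_erase]
  rw [h1, h2, hρ.1] at h
  linarith

lemma pm_key_up (hρ : IsPolymatroid ρ) {X Y : Finset α} {i : α} (hXY : X ⊆ Y) (hi : i ∈ X)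
    (h : ρ X < ρ (X.erase i) + ρ {i}) : ρ Y < ρ (Y.erase i) + ρ {i} := by
  have h2 := hρ.2.2 (Y.erase i) X
  have hu : Y.erase i ∪ X = Y := by
    apply Subset.antisymm
    · exact union_subset (erase_subset _ _) hXY
    · intro j hj
      by_cases hji : j = i
      · exact mem_union_right _ (hji ▸ hi)
      · exact mem_union_left _ (mem_erase.2 ⟨hji, hj⟩)
  have hint : Y.erase i ∩ X = X.erase i := by
    ext j
    simp only [mem_inter, mem_erase]
    exact ⟨fun ⟨⟨hji, _⟩, hjX⟩ => ⟨hji, hjX⟩, fun ⟨hji, hjX⟩ => ⟨⟨hji, hXY hjX⟩, hjX⟩⟩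
  rw [hu, hint] at h2
  linarith

lemma pm_mem_cl [Fintype α] {A : Finset α} {i : α} :
    i ∈ pmCl ρ A ↔ ρ (insert i A) = ρ A := by
  simp [pmCl]

lemma pm_subset_cl [Fintype α] (A : Finset α) : A ⊆ pmCl ρ A := by
  intro i hi
  rw [pm_mem_cl, insert_eq_self.2 hi]

lemma pm_rank_union (hρ : IsPolymatroid ρ) (A : Finset α) (S : Finset α)
    (h : ∀ i ∈ S, ρ (insert i A) = ρ A) : ρ (A ∪ S) = ρ A := by
  induction S using Finset.induction_on with
  | empty => simp
  | @insert i S hiS ih =>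
    have hS : ρ (A ∪ S) = ρ A := ih (fun j hj => h j (mem_insert_of_mem hj))
    have hi : ρ (insert i A) = ρ A := h i (mem_insert_self i S)
    have hsub := hρ.2.2 (A ∪ S) (insert i A)
    have hu : (A ∪ S) ∪ insert i A = insert i (A ∪ S) := by
      ext j; simp [mem_union, mem_insert]; tauto
    have hintA : A ⊆ (A ∪ S) ∩ insert i A :=
      subset_inter subset_union_left (subset_insert _ _)
    have hge : ρ A ≤ ρ ((A ∪ S) ∩ insert i A) := hρ.2.1 _ _ hintA
    rw [hu] at hsub
    have hle : ρ (insert i (A ∪ S)) ≤ ρ A := by linarith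
    have : ρ A ≤ ρ (insert i (A ∪ S)) :=
      hρ.2.1 _ _ (subset_trans subset_union_left (subset_insert _ _))
    rw [union_insert]
    linarith

lemma pm_cl_rank [Fintype α] (hρ : IsPolymatroid ρ) (A : Finset α) :
    ρ (pmCl ρ A) = ρ A := by
  have h := pm_rank_union hρ A (pmCl ρ A) (fun i hi => pm_mem_cl.1 hi)
  rwa [union_eq_right.2 (pm_subset_cl A)] at h

lemma pm_cl_flat [Fintype α] (hρ : IsPolymatroid ρ) (A : Finset α) :
    PmFlat ρ (pmCl ρ A) := by
  intro i hi
  have hne : ρ (insert i A) ≠ ρ A := fun h => hi (pm_mem_cl.2 h)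
  have h1 : ρ A < ρ (insert i A) :=
    lt_of_le_of_ne (hρ.2.1 _ _ (subset_insert _ _)) (Ne.symm hne)
  have h2 : ρ (insert i A) ≤ ρ (insert i (pmCl ρ A)) :=
    hρ.2.1 _ _ (insert_subset_insert _ (pm_subset_cl A))
  rw [pm_cl_rank hρ]
  linarith

lemma pm_mem_cy {A : Finset α} {i : α} :
    i ∈ pmCy ρ A ↔ ∃ D, D ⊆ A ∧ PmCyclic ρ D ∧ i ∈ D := by
  simp only [pmCy, Finset.mem_sup, mem_filter, mem_powerset, id]
  tauto

lemma pm_cy_subset (A : Finset α) : pmCy ρ A ⊆ A := by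
  intro i hi
  rcases pm_mem_cy.1 hi with ⟨D, hDA, _, hiD⟩
  exact hDA hiD

lemma pm_subset_cy {A D : Finset α} (hDA : D ⊆ A) (hD : PmCyclic ρ D) :
    D ⊆ pmCy ρ A := fun i hi => pm_mem_cy.2 ⟨D, hDA, hD, hi⟩

lemma pm_cy_mono {A B : Finset α} (h : A ⊆ B) : pmCy ρ A ⊆ pmCy ρ B := by
  intro i hi
  rcases pm_mem_cy.1 hi with ⟨D, hDA, hD, hiD⟩
  exact pm_mem_cy.2 ⟨D, subset_trans hDA h, hD, hiD⟩

lemma pm_cy_cyclic (hρ : IsPolymatroid ρ) (A : Finset α) : PmCyclic ρ (pmCy ρ A) := by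
  intro i hi hpos
  rcases pm_mem_cy.1 hi with ⟨D, hDA, hD, hiD⟩
  exact pm_key_up hρ (pm_subset_cy hDA hD) hiD (hD i hiD hpos)

lemma pm_loop_mem_cy {A : Finset α} {i : α} (hi : i ∈ A) (h0 : ¬ 0 < ρ {i}) :
    i ∈ pmCy ρ A := by
  have : PmCyclic ρ {i} := by
    intro j hj hpos
    rw [mem_singleton] at hj
    exact absurd (hj ▸ hpos) h0
  exact pm_subset_cy (singleton_subset_iff.2 hi) this (mem_singleton_self i)

lemma pm_cy_main (hρ : IsPolymatroid ρ) (A : Finset α) :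
    ρ A = ρ (pmCy ρ A) + ∑ i ∈ A \ pmCy ρ A, ρ {i} ∧
    ∀ i ∈ A, ρ A < ρ (A.erase i) + ρ {i} → i ∈ pmCy ρ A := by
  induction A using Finset.strongInduction with
  | _ A ih =>
  by_cases hcyc : PmCyclic ρ A
  · have hA : pmCy ρ A = A :=
      Subset.antisymm (pm_cy_subset A) (pm_subset_cy (Subset.refl A) hcyc)
    rw [hA]
    refine ⟨by simp, fun i hi _ => hi⟩
  · unfold PmCyclic at hcyc
    push_neg at hcyc
    obtain ⟨j, hj, hjpos, hjle⟩ := hcyc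
    have heq : ρ A = ρ (A.erase j) + ρ {j} := le_antisymm (pm_erase hρ hj) hjle
    have hjcy : j ∉ pmCy ρ A := by
      intro hmem
      rcases pm_mem_cy.1 hmem with ⟨D, hDA, hD, hjD⟩
      have := pm_key_up hρ hDA hjD (hD j hjD hjpos)
      linarith
    have hcy_eq : pmCy ρ A = pmCy ρ (A.erase j) := by
      apply Subset.antisymm
      · intro i hi
        rcases pm_mem_cy.1 hi with ⟨D, hDA, hD, hiD⟩
        have hjD : j ∉ D := fun hjD => by
          have := pm_key_up hρ hDA hjD (hD j hjD hjpos); linarith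
        exact pm_mem_cy.2 ⟨D, subset_erase.2 ⟨hDA, hjD⟩, hD, hiD⟩
      · exact pm_cy_mono (erase_subset _ _)
    have ihj := ih (A.erase j) (erase_ssubset hj)
    have hset : A \ pmCy ρ A = insert j ((A.erase j) \ pmCy ρ A) := by
      ext k
      simp only [mem_sdiff, mem_insert, mem_erase]
      constructor
      · rintro ⟨hkA, hk⟩
        by_cases hkj : k = j
        · exact Or.inl hkj
        · exact Or.inr ⟨⟨hkj, hkA⟩, hk⟩
      · rintro (rfl | ⟨⟨_, hkA⟩, hk⟩)
        · exact ⟨hj, hjcy⟩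
        · exact ⟨hkA, hk⟩
    constructor
    · rw [hset, sum_insert (by simp), hcy_eq]
      have h1 := ihj.1
      linarith
    · intro i hi hstrict
      have hij : i ≠ j := by
        rintro rfl; rw [heq] at hstrict; linarith
      have hji : j ∈ A.erase i := mem_erase.2 ⟨Ne.symm hij, hj⟩
      have h1 : ρ (A.erase i) ≤ ρ ((A.erase i).erase j) + ρ {j} := pm_erase hρ hji
      have hcomm : (A.erase i).erase j = (A.erase j).erase i := by
        ext k; simp only [mem_erase]; tauto
      rw [hcomm] at h1
      have hstep : ρ (A.erase j) < ρ ((A.erase j).erase i) + ρ {i} := by linarith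
      have := ihj.2 i (mem_erase.2 ⟨hij, hi⟩) hstep
      rw [hcy_eq]
      exact this

lemma pm_insert_cyclic (hρ : IsPolymatroid ρ) {C : Finset α} {i : α}
    (hC : PmCyclic ρ C) (hiC : i ∉ C) (hpos : 0 < ρ {i})
    (heq : ρ (insert i C) = ρ C) : PmCyclic ρ (insert i C) := by
  intro j hj hjpos
  rcases mem_insert.1 hj with rfl | hjC
  · rw [erase_insert hiC, heq]
    linarith
  · exact pm_key_up hρ (subset_insert i C) hjC (hC j hjC hjpos)

end Aux

theorem cl_cy_and_cy_cl_mem_R [DecidableEq α] [Fintype α]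
    (ρ : Finset α → ℝ) (hρ : IsPolymatroid ρ) (A : Finset α) :
    (PmFlat ρ (pmCl ρ (pmCy ρ A)) ∧ PmCyclic ρ (pmCl ρ (pmCy ρ A)) ∧
      ρ A = ρ (pmCl ρ (pmCy ρ A)) + ∑ i ∈ A \ pmCl ρ (pmCy ρ A), ρ {i}) ∧
    (PmFlat ρ (pmCy ρ (pmCl ρ A)) ∧ PmCyclic ρ (pmCy ρ (pmCl ρ A)) ∧
      ρ A = ρ (pmCy ρ (pmCl ρ A)) + ∑ i ∈ A \ pmCy ρ (pmCl ρ A), ρ {i}) := by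
  set C := pmCy ρ A with hC
  have hCcyc : PmCyclic ρ C := pm_cy_cyclic hρ A
  have hCA : C ⊆ A := pm_cy_subset A
  -- in cl(C) but in A and not in C: impossible
  have hnew : ∀ i ∈ A, i ∉ C → i ∉ pmCl ρ C := by
    intro i hiA hiC hicl
    have heq : ρ (insert i C) = ρ C := pm_mem_cl.1 hicl
    have hpos : 0 < ρ {i} := by
      by_contra h0
      exact hiC (pm_loop_mem_cy hiA h0)
    have hcyc2 : PmCyclic ρ (insert i C) := pm_insert_cyclic hρ hCcyc hiC hpos heq
    have : insert i C ⊆ pmCy ρ A := pm_subset_cy (insert_subset hiA hCA) hcyc2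
    exact hiC (this (mem_insert_self i C))
  constructor
  · refine ⟨pm_cl_flat hρ C, ?_, ?_⟩
    · -- cl of cyclic is cyclic
      intro i hi hpos
      by_cases hiC : i ∈ C
      · exact pm_key_up hρ (pm_subset_cl C) hiC (hCcyc i hiC hpos)
      · have hsub : C ⊆ (pmCl ρ C).erase i := subset_erase.2 ⟨pm_subset_cl C, hiC⟩
        have := hρ.2.1 _ _ hsub
        have hr := pm_cl_rank hρ C
        linarith
    · have hsd : A \ pmCl ρ C = A \ C := by
        ext k
        simp only [mem_sdiff]
        constructor
        · rintro ⟨hkA, hk⟩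
          exact ⟨hkA, fun hkC => hk (pm_subset_cl C hkC)⟩
        · rintro ⟨hkA, hk⟩
          exact ⟨hkA, hnew k hkA hk⟩
      rw [hsd, pm_cl_rank hρ C]
      exact (pm_cy_main hρ A).1
  · set F := pmCl ρ A with hF
    have hFflat : PmFlat ρ F := pm_cl_flat hρ A
    have hFr : ρ F = ρ A := pm_cl_rank hρ A
    have hAF : A ⊆ F := pm_subset_cl A
    have hcyF : pmCy ρ F ⊆ F := pm_cy_subset F
    refine ⟨?_, pm_cy_cyclic hρ F, ?_⟩
    · intro i hi
      by_cases hiF : i ∈ F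
      · have hpos : 0 < ρ {i} := by
          by_contra h0
          exact hi (pm_loop_mem_cy hiF h0)
        have hlt : ρ (pmCy ρ F) ≤ ρ (insert i (pmCy ρ F)) :=
          hρ.2.1 _ _ (subset_insert _ _)
        rcases lt_or_eq_of_le hlt with h | h
        · exact h
        · exfalso
          have hcyc2 : PmCyclic ρ (insert i (pmCy ρ F)) :=
            pm_insert_cyclic hρ (pm_cy_cyclic hρ F) hi (by exact hpos) h.symm
          have : insert i (pmCy ρ F) ⊆ pmCy ρ F :=
            pm_subset_cy (insert_subset hiF hcyF) hcyc2
          exact hi (this (mem_insert_self _ _))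
      · have hsub := hρ.2.2 (insert i (pmCy ρ F)) F
        have hu : insert i (pmCy ρ F) ∪ F = insert i F := by
          ext j
          simp only [mem_union, mem_insert]
          constructor
          · rintro ((rfl | hj) | hj)
            · exact Or.inl rfl
            · exact Or.inr (hcyF hj)
            · exact Or.inr hj
          · rintro (rfl | hj)
            · exact Or.inl (Or.inl rfl)
            · exact Or.inr hj
        have hint : insert i (pmCy ρ F) ∩ F = pmCy ρ F := by
          ext j
          simp only [mem_inter, mem_insert]
          constructor
          · rintro ⟨rfl | hj, hjF⟩
            · exact absurd hjF hiF
            · exact hj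
          · intro hj
            exact ⟨Or.inr hj, hcyF hj⟩
        rw [hu, hint] at hsub
        have := hFflat i hiF
        linarith
    · have hsd : A \ pmCy ρ F = F \ pmCy ρ F := by
        ext k
        simp only [mem_sdiff]
        constructor
        · rintro ⟨hkA, hk⟩
          exact ⟨hAF hkA, hk⟩
        · rintro ⟨hkF, hk⟩
          refine ⟨?_, hk⟩
          by_contra hkA
          have hpos : 0 < ρ {k} := by
            by_contra h0
            exact hk (pm_loop_mem_cy hkF h0)
          have hsubA : A ⊆ F.erase k := subset_erase.2 ⟨hAF, hkA⟩
          have h1 : ρ A ≤ ρ (F.erase k) := hρ.2.1 _ _ hsubA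
          have hstrict : ρ F < ρ (F.erase k) + ρ {k} := by linarith
          exact hk ((pm_cy_main hρ F).2 k hkF hstrict)
      rw [hsd, ← hFr]
      exact (pm_cy_main hρ F).1
end

section
/- Let ρ be a polymatroid on E and let A ⊆ E. Then the maximum cyclic subset cy_ρ(A) of A satisfies: ρ(A) = ρ(cy_ρ(A)) + Σ_{i ∈ A \ cy_ρ(A)} ρ({i}). -/
open Finset
open scoped Classical

variable {α : Type*}

lemma pmCy_subset [DecidableEq α] (ρ : Finset α → ℝ) (A : Finset α) : pmCy ρ A ⊆ A :=
  Finset.sup_le fun D hD => Finset.mem_powerset.1 (Finset.mem_filter.1 hD).1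

lemma subset_pmCy [DecidableEq α] (ρ : Finset α → ℝ) {A D : Finset α}
    (hD : D ⊆ A) (hc : PmCyclic ρ D) : D ⊆ pmCy ρ A :=
  Finset.le_sup (f := id) (Finset.mem_filter.2 ⟨Finset.mem_powerset.2 hD, hc⟩)

lemma notMem_cyclic [DecidableEq α] (ρ : Finset α → ℝ) (hρ : IsPolymatroid ρ)
    {A D : Finset α} {i : α} (hiA : i ∈ A) (hpos : 0 < ρ {i})
    (heq : ρ (A.erase i) + ρ {i} ≤ ρ A) (hD : D ⊆ A) (hc : PmCyclic ρ D) : i ∉ D := by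
  intro hiD
  have h1 : ρ D < ρ (D.erase i) + ρ {i} := hc i hiD hpos
  have hsub := hρ.2.2 (A.erase i) D
  have hu : A.erase i ∪ D = A := by
    apply Finset.Subset.antisymm
    · exact Finset.union_subset (Finset.erase_subset i A) hD
    · intro a ha
      by_cases h : a = i
      · exact Finset.mem_union.2 (Or.inr (h ▸ hiD))
      · exact Finset.mem_union.2 (Or.inl (Finset.mem_erase.2 ⟨h, ha⟩))
  have hi : A.erase i ∩ D = D.erase i := by
    ext a
    simp only [Finset.mem_inter, Finset.mem_erase]
    exact ⟨fun ⟨⟨h1, _⟩, h2⟩ => ⟨h1, h2⟩, fun ⟨h1, h2⟩ => ⟨⟨h1, hD h2⟩, h2⟩⟩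
  rw [hu, hi] at hsub
  linarith

lemma pmCy_erase [DecidableEq α] (ρ : Finset α → ℝ) (hρ : IsPolymatroid ρ)
    {A : Finset α} {i : α} (hiA : i ∈ A) (hpos : 0 < ρ {i})
    (heq : ρ (A.erase i) + ρ {i} ≤ ρ A) : pmCy ρ (A.erase i) = pmCy ρ A := by
  apply Finset.Subset.antisymm
  · exact Finset.sup_le fun D hD =>
      subset_pmCy ρ ((Finset.mem_powerset.1 (Finset.mem_filter.1 hD).1).trans
        (Finset.erase_subset i A)) (Finset.mem_filter.1 hD).2
  · show _ ≤ pmCy ρ (A.erase i)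
    exact Finset.sup_le fun D hD => by
      obtain ⟨hDs, hDc⟩ := Finset.mem_filter.1 hD
      have hDA := Finset.mem_powerset.1 hDs
      have hni := notMem_cyclic ρ hρ hiA hpos heq hDA hDc
      exact subset_pmCy ρ (fun a ha => Finset.mem_erase.2 ⟨fun h => hni (h ▸ ha), hDA ha⟩) hDc

lemma rank_eq_rank_cy_add_sum_aux [DecidableEq α]
    (ρ : Finset α → ℝ) (hρ : IsPolymatroid ρ) (A : Finset α) :
    ρ A = ρ (pmCy ρ A) + ∑ i ∈ A \ pmCy ρ A, ρ {i} := by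
  induction A using Finset.strongInduction with
  | _ A ih =>
    by_cases hcyc : PmCyclic ρ A
    · have h1 : pmCy ρ A = A :=
        Finset.Subset.antisymm (pmCy_subset ρ A) (subset_pmCy ρ (Finset.Subset.refl A) hcyc)
      rw [h1, Finset.sdiff_self, Finset.sum_empty, add_zero]
    · simp only [PmCyclic, not_forall, not_lt] at hcyc
      obtain ⟨i, hiA, hpos, hge⟩ := hcyc
      have hle : ρ A ≤ ρ (A.erase i) + ρ {i} := by
        have hsub := hρ.2.2 (A.erase i) {i}
        have hu : A.erase i ∪ {i} = A := by
          rw [Finset.union_comm, ← Finset.insert_eq, Finset.insert_erase hiA]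
        have hi : A.erase i ∩ {i} = ∅ := by
          ext a; simp only [Finset.mem_inter, Finset.mem_erase, Finset.mem_singleton,
            Finset.notMem_empty, iff_false]
          rintro ⟨⟨h1, _⟩, h2⟩; exact h1 h2
        rw [hu, hi, hρ.1, add_zero] at hsub
        exact hsub
      have heq : ρ A = ρ (A.erase i) + ρ {i} := le_antisymm hle hge
      have hcyE := pmCy_erase ρ hρ hiA hpos hge
      have ihE := ih (A.erase i) (Finset.erase_ssubset hiA)
      have hni : i ∉ pmCy ρ A := by
        intro h
        rw [← hcyE] at h
        exact (Finset.mem_erase.1 (pmCy_subset ρ (A.erase i) h)).1 rfl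
      have hset : A \ pmCy ρ A = insert i (A.erase i \ pmCy ρ A) := by
        ext a
        simp only [Finset.mem_sdiff, Finset.mem_insert, Finset.mem_erase]
        constructor
        · rintro ⟨ha, hc⟩
          by_cases h : a = i
          · exact Or.inl h
          · exact Or.inr ⟨⟨h, ha⟩, hc⟩
        · rintro (rfl | ⟨⟨_, ha⟩, hc⟩)
          · exact ⟨hiA, hni⟩
          · exact ⟨ha, hc⟩
      have hnotin : i ∉ A.erase i \ pmCy ρ A := fun h =>
        (Finset.mem_erase.1 (Finset.mem_sdiff.1 h).1).1 rfl
      rw [hset, Finset.sum_insert hnotin, ← hcyE, heq, ihE]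
      ring

theorem rank_eq_rank_cy_add_sum [DecidableEq α] [Fintype α]
    (ρ : Finset α → ℝ) (hρ : IsPolymatroid ρ) (A B : Finset α)
    (hBA : B ⊆ A) (hBcyc : PmCyclic ρ B) (hranks : ρ (A ∩ B) = ρ B) :
    ρ A = ρ (pmCy ρ A) + ∑ i ∈ A \ pmCy ρ A, ρ {i} := by
  exact rank_eq_rank_cy_add_sum_aux ρ hρ A
end
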